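/- Let φ1(p) = sqrt((E(p)-1)/(2E(p))) with E(p) = sqrt(p^2+1). Then for all p, q ≥ 0, (φ1(p) - φ1(q))^2 ≤ (p - q)^2 / (2 E(p)^2 E(q)^2). -/
import Mathlib

noncomputable def Erel (p : ℝ) : ℝ := Real.sqrt (p ^ 2 + 1)

noncomputable def phi1 (p : ℝ) : ℝ := Real.sqrt ((Erel p - 1) / (2 * Erel p))

lemma one_le_Erel (p : ℝ) : 1 ≤ Erel p := by
  have : (1:ℝ) = Real.sqrt 1 := (Real.sqrt_one).symm
  rw [this, Erel]
  exact Real.sqrt_le_sqrt (by nlinarith [sq_nonneg p])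

lemma Erel_sq (p : ℝ) : (Erel p) ^ 2 = p ^ 2 + 1 :=
  Real.sq_sqrt (by positivity)

lemma phi1_nonneg (p : ℝ) : 0 ≤ phi1 p := Real.sqrt_nonneg _

lemma phi1_sq (p : ℝ) : 2 * Erel p * (phi1 p) ^ 2 = Erel p - 1 := by
  have h1 : (1:ℝ) ≤ Erel p := one_le_Erel p
  have h0 : (0:ℝ) < Erel p := by linarith
  have : (phi1 p) ^ 2 = (Erel p - 1) / (2 * Erel p) := by
    rw [phi1, Real.sq_sqrt]
    exact div_nonneg (by linarith) (by linarith)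
  rw [this]
  field_simp

lemma key_lb (p q : ℝ) (hp : 0 ≤ p) : p ≤ Real.sqrt 2 * (Erel p + Erel q) * phi1 p := by
  set a := Erel p
  set b := Erel q
  set φ := phi1 p
  have h1 : (1:ℝ) ≤ a := one_le_Erel p
  have h2 : (1:ℝ) ≤ b := one_le_Erel q
  have e1 := phi1_sq p
  have hE := Erel_sq p
  have hphi : 0 ≤ φ := phi1_nonneg p
  have hs2 : (Real.sqrt 2) ^ 2 = 2 := Real.sq_sqrt (by norm_num)
  have hs2n : (0:ℝ) ≤ Real.sqrt 2 := Real.sqrt_nonneg 2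
  have hB : (0:ℝ) ≤ Real.sqrt 2 * (a + b) * φ := by positivity
  have hfac : 0 ≤ (a - 1) * ((a + b) ^ 2 - a * (a + 1)) := by
    apply mul_nonneg (by linarith)
    nlinarith
  have e1' : 2 * a * ((a + b) ^ 2 * φ ^ 2) = (a - 1) * (a + b) ^ 2 := by
    linear_combination (a + b) ^ 2 * e1
  have hE' : a * p ^ 2 = a ^ 3 - a := by linear_combination -a * hE
  have hmul : a * p ^ 2 ≤ a * (2 * (a + b) ^ 2 * φ ^ 2) := by
    nlinarith [hfac, e1', hE']
  have hsq' : p ^ 2 ≤ 2 * (a + b) ^ 2 * φ ^ 2 :=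
    le_of_mul_le_mul_left hmul (by linarith)
  have hsq : p ^ 2 ≤ (Real.sqrt 2 * (a + b) * φ) ^ 2 := by
    calc p ^ 2 ≤ 2 * (a + b) ^ 2 * φ ^ 2 := hsq'
      _ = (Real.sqrt 2 * (a + b) * φ) ^ 2 := by rw [mul_pow, mul_pow, hs2]
  calc p = Real.sqrt (p ^ 2) := (Real.sqrt_sq hp).symm
    _ ≤ Real.sqrt ((Real.sqrt 2 * (a + b) * φ) ^ 2) := Real.sqrt_le_sqrt hsq
    _ = _ := Real.sqrt_sq hB

theorem phi1_diff_sq_bound (p q : ℝ) (hp : 0 ≤ p) (hq : 0 ≤ q) :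
    (phi1 p - phi1 q) ^ 2 ≤ (p - q) ^ 2 / (2 * (Erel p) ^ 2 * (Erel q) ^ 2) := by
  set a := Erel p with ha
  set b := Erel q with hb
  set x := phi1 p with hx
  set y := phi1 q with hy
  have h1 : (1:ℝ) ≤ a := one_le_Erel p
  have h2 : (1:ℝ) ≤ b := one_le_Erel q
  have ea := Erel_sq p
  have eb := Erel_sq q
  have px := phi1_sq p
  have py := phi1_sq q
  have hxn := phi1_nonneg p
  have hyn := phi1_nonneg q
  have hden : (0:ℝ) < 2 * a ^ 2 * b ^ 2 := by positivity
  rw [le_div_iff₀ hden]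
  rcases eq_or_lt_of_le (add_nonneg hxn hyn) with hD | hD
  · have hx0 : x = 0 := by linarith
    have hy0 : y = 0 := by linarith
    rw [hx0, hy0]
    simp
    positivity
  · have step : (x - y) * (x + y) * (2 * a * b) = a - b := by
      linear_combination b * px - a * py
    have key : (x - y) * (2 * a * b * ((a + b) * (x + y))) = p ^ 2 - q ^ 2 := by
      linear_combination (a + b) * step + ea - eb
    have hpq : p + q ≤ Real.sqrt 2 * ((a + b) * (x + y)) := by
      have l1 := key_lb p q hp
      have l2 := key_lb q p hq
      have e2 : Real.sqrt 2 * (Erel q + Erel p) * phi1 q = Real.sqrt 2 * (b + a) * y := rfl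
      rw [e2] at l2
      have l1' : p ≤ Real.sqrt 2 * (a + b) * x := l1
      nlinarith [Real.sqrt_nonneg 2]
    have hs2 : (Real.sqrt 2) ^ 2 = 2 := Real.sq_sqrt (by norm_num)
    have hpqn : (0:ℝ) ≤ p + q := by linarith
    have h4 : (p + q) ^ 2 ≤ 2 * ((a + b) * (x + y)) ^ 2 := by
      calc (p + q) ^ 2 ≤ (Real.sqrt 2 * ((a + b) * (x + y))) ^ 2 :=
            pow_le_pow_left₀ hpqn hpq 2
        _ = 2 * ((a + b) * (x + y)) ^ 2 := by rw [mul_pow, hs2]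
    have hpos : (0:ℝ) < 2 * ((a + b) * (x + y)) ^ 2 := by
      have : (0:ℝ) < (a + b) * (x + y) := by positivity
      positivity
    have h5 : (x - y) ^ 2 * (2 * a ^ 2 * b ^ 2) * (2 * ((a + b) * (x + y)) ^ 2)
        ≤ (p - q) ^ 2 * (2 * ((a + b) * (x + y)) ^ 2) := by
      calc (x - y) ^ 2 * (2 * a ^ 2 * b ^ 2) * (2 * ((a + b) * (x + y)) ^ 2)
          = ((x - y) * (2 * a * b * ((a + b) * (x + y)))) ^ 2 := by ring
        _ = (p ^ 2 - q ^ 2) ^ 2 := by rw [key]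
        _ = (p - q) ^ 2 * (p + q) ^ 2 := by ring
        _ ≤ (p - q) ^ 2 * (2 * ((a + b) * (x + y)) ^ 2) :=
            mul_le_mul_of_nonneg_left h4 (sq_nonneg _)
    exact le_of_mul_le_mul_right h5 hpos
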